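/- arXiv:1606.03340 — 2 statements merged into one kernel-verified Lean document; each statement's English description precedes it below -/
import Mathlib

section
/- Let (X,d,μ) be upper doubling with dominating function λ and constant C_λ, K a Calderón–Zygmund kernel with constant C_K and Dini modulus ω, and D a David–Mattila lattice with parameters C_0, A_0. Suppose the maximal truncation T^♯f(x) := sup_{ε>0} |∫_{d(x,y)>ε} K(x,y) f(y) dμ(y)| satisfies the weak type (1,1) bound μ{T^♯f > t} ≤ C_W·‖f‖_{L¹(μ)}/t. Then the operators N_{Q₀}f(x) := 1_{Q₀}(x)·sup over cells P ∈ D with x ∈ P ⊂ Q₀ of sup_{y∈P} |∫_{X∖30B(P)} K(y,z) f(z) dμ(z)| satisfy a uniform weak type (1,1) bound: there is a constant C depending only on C_W, C_K, ‖ω‖_Dini, C_λ, C_0, A_0, but not on Q₀, such that μ{x : N_{Q₀}f(x) > t} ≤ C·‖f‖_{L¹(μ)}/t for every cell Q₀ ∈ D, every t > 0, and every integrable f supported on 30B(Q₀). -/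
open MeasureTheory Metric Set ENNReal

noncomputable section

variable {X : Type*} [MetricSpace X] [MeasurableSpace X] [BorelSpace X]

/-- The support of a measure on a metric space: points all of whose balls have
positive measure. -/
def msupport (μ : Measure X) : Set X := {x | ∀ r : ℝ, 0 < r → 0 < μ (ball x r)}

/-- `(X, d, μ)` is upper doubling with dominating function `lam` and constant `Cl`. -/
structure IsUpperDoubling (μ : Measure X) (lam : X → ℝ → ℝ) (Cl : ℝ) : Prop where
  one_lt : 1 < Cl
  lam_pos : ∀ x r, 0 < r → 0 < lam x r
  lam_mono : ∀ x r₁ r₂, 0 < r₁ → r₁ ≤ r₂ → lam x r₁ ≤ lam x r₂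
  measure_le : ∀ x r, 0 < r → μ (ball x r) ≤ ENNReal.ofReal (lam x r)
  halving : ∀ x r, 0 < r → lam x r ≤ Cl * lam x (r / 2)
  close : ∀ x y r, 0 < r → dist x y ≤ r → lam x r ≤ Cl * lam y r

/-- `(X, d)` is geometrically doubling with constant `C` and doubling dimension `n`:
every `r`-separated subset of a ball of radius `R ≥ r` has cardinality at most `C (R/r)^n`. -/
def GeometricallyDoubling (X : Type*) [MetricSpace X] (C : ℝ) (n : ℕ) : Prop :=
  ∀ (x : X) (R r : ℝ), 0 < r → r ≤ R →
    ∀ S : Finset X, (↑S : Set X) ⊆ ball x R →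
      (∀ a ∈ S, ∀ b ∈ S, a ≠ b → r ≤ dist a b) → (S.card : ℝ) ≤ C * (R / r) ^ n

/-- `ω` is a Dini modulus of continuity. -/
structure IsDiniModulus (ω : ℝ → ℝ) : Prop where
  nonneg : ∀ t, 0 ≤ t → 0 ≤ ω t
  mono : MonotoneOn ω (Set.Ici 0)
  subadd : ∀ s t, 0 ≤ s → 0 ≤ t → ω (s + t) ≤ ω s + ω t
  zero : ω 0 = 0
  pos : ∀ t, 0 < t → 0 < ω t
  summable : Summable (fun j : ℕ => ω ((2 : ℝ) ^ (-(j : ℤ))))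

/-- The Dini norm `∑_{j ≥ 0} ω(2^{-j})`. -/
def diniNorm (ω : ℝ → ℝ) : ℝ := ∑' j : ℕ, ω ((2 : ℝ) ^ (-(j : ℤ)))

/-- `K` is a Calderón–Zygmund kernel with size constant `CK` and modulus of continuity `ω`,
relative to the dominating function `lam`. -/
structure IsCZKernel (lam : X → ℝ → ℝ) (K : X → X → ℂ) (CK : ℝ) (ω : ℝ → ℝ) : Prop where
  size : ∀ x y, x ≠ y → ‖K x y‖ ≤ CK / lam x (dist x y)
  smooth : ∀ x x' y, x ≠ y → dist x x' < dist x y / 2 →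
    ‖K x y - K x' y‖ + ‖K y x - K y x'‖ ≤ ω (dist x x' / dist x y) / lam x (dist x y)

/-- The maximal truncation `T^♯ f(x) = sup_{ε > 0} |∫_{d(x,y) > ε} K(x,y) f(y) dμ(y)|`,
valued in `ℝ≥0∞`. -/
noncomputable def Tsharp (μ : Measure X) (K : X → X → ℂ) (f : X → ℂ) (x : X) : ℝ≥0∞ :=
  ⨆ (ε : ℝ) (_ : 0 < ε), ENNReal.ofReal ‖∫ y in (closedBall x ε)ᶜ, K x y * f y ∂μ‖

/-- `T` is an `L²(μ)`-bounded Calderón–Zygmund operator with kernel `K` and `L²` norm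
bound `CT`. -/
structure IsCZOperator (μ : Measure X) (K : X → X → ℂ) (T : (X → ℂ) → X → ℂ) (CT : ℝ) :
    Prop where
  map_add : ∀ f g, MemLp f 2 μ → MemLp g 2 μ → T (f + g) = T f + T g
  map_smul : ∀ (c : ℂ) (f), MemLp f 2 μ → T (c • f) = c • T f
  norm_bound : ∀ f, MemLp f 2 μ → eLpNorm (T f) 2 μ ≤ ENNReal.ofReal CT * eLpNorm f 2 μ
  rep : ∀ f : X → ℂ, (∃ M, ∀ x, ‖f x‖ ≤ M) → Bornology.IsBounded (Function.support f) →
    ∀ x, x ∉ tsupport f → T f x = ∫ y, K x y * f y ∂μ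

/-- A David–Mattila lattice with parameters `C0, A0` associated to `μ`:
for each generation `k` a Borel partition `cells k` of `supp μ`, each cell `Q` carrying a
ball `B(Q) = B(center k Q, radius k Q)`. -/
structure DavidMattila (μ : Measure X) (C0 A0 : ℝ) where
  cells : ℕ → Set (Set X)
  center : ℕ → Set X → X
  radius : ℕ → Set X → ℝ
  measurable : ∀ k, ∀ Q ∈ cells k, MeasurableSet Q
  cover : ∀ k, ⋃₀ cells k = msupport μ
  pairwise_disjoint : ∀ k, ∀ Q ∈ cells k, ∀ R ∈ cells k, Q ≠ R → Disjoint Q R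
  nested : ∀ k l, k < l → ∀ Q ∈ cells l, ∀ R ∈ cells k, Q ⊆ R ∨ Disjoint Q R
  center_mem : ∀ k, ∀ Q ∈ cells k, center k Q ∈ msupport μ
  radius_lb : ∀ k, ∀ Q ∈ cells k, A0 ^ (-(k : ℤ)) ≤ radius k Q
  radius_ub : ∀ k, ∀ Q ∈ cells k, radius k Q ≤ C0 * A0 ^ (-(k : ℤ))
  ball_subset : ∀ k, ∀ Q ∈ cells k, msupport μ ∩ ball (center k Q) (radius k Q) ⊆ Q
  subset_ball : ∀ k, ∀ Q ∈ cells k, Q ⊆ msupport μ ∩ ball (center k Q) (28 * radius k Q)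
  disjoint_five : ∀ k, ∀ Q ∈ cells k, ∀ R ∈ cells k, Q ≠ R →
    Disjoint (ball (center k Q) (5 * radius k Q)) (ball (center k R) (5 * radius k R))
  nondoubling : ∀ k, ∀ Q ∈ cells k,
    ENNReal.ofReal C0 * μ (ball (center k Q) (radius k Q)) <
        μ (ball (center k Q) (100 * radius k Q)) →
      radius k Q = A0 ^ (-(k : ℤ)) ∧
      ∀ c : ℝ, 1 ≤ c → c ≤ C0 →
        ENNReal.ofReal C0 * μ (ball (center k Q) (c * radius k Q)) ≤
          μ (ball (center k Q) (100 * c * radius k Q))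

/-- The average `A(f,Q) = μ(αB(Q))⁻¹ ∫_{30B(Q)} |f| dμ` attached to a ball `B(z,r)`. -/
noncomputable def cellAvg (μ : Measure X) (α : ℝ) (f : X → ℂ) (z : X) (r : ℝ) : ℝ≥0∞ :=
  (∫⁻ y in ball z (30 * r), ‖f y‖₊ ∂μ) / μ (ball z (α * r))

/-- `Θ(Q) = μ(αB(Q)) / λ(z_Q, α r(Q))`. -/
noncomputable def theta (μ : Measure X) (lam : X → ℝ → ℝ) (α : ℝ) (z : X) (r : ℝ) : ℝ≥0∞ :=
  μ (ball z (α * r)) / ENNReal.ofReal (lam z (α * r))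

/-- The maximal function `M_λ f(x) = sup_{R>0} λ(x,R)⁻¹ ∫_{B(x,R)} |f| dμ`. -/
noncomputable def Mlam (μ : Measure X) (lam : X → ℝ → ℝ) (f : X → ℂ) (x : X) : ℝ≥0∞ :=
  ⨆ (R : ℝ) (_ : 0 < R), (∫⁻ y in ball x R, ‖f y‖₊ ∂μ) / ENNReal.ofReal (lam x R)

/-- The localized grand maximal truncated operator `N_{Q₀}`. -/
noncomputable def grandMax (μ : Measure X) {C0 A0 : ℝ} (D : DavidMattila μ C0 A0)
    (K : X → X → ℂ) (Q0 : Set X) (f : X → ℂ) (x : X) : ℝ≥0∞ :=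
  Q0.indicator (fun x' =>
    ⨆ (k : ℕ) (P : Set X) (_ : P ∈ D.cells k) (_ : x' ∈ P) (_ : P ⊆ Q0) (y : X) (_ : y ∈ P),
      ENNReal.ofReal
        ‖∫ z in (ball (D.center k P) (30 * D.radius k P))ᶜ, K y z * f z ∂μ‖) x

/-- `∫_S w dμ` for a weight `w`. -/
noncomputable def wInt (μ : Measure X) (w : X → ℝ) (S : Set X) : ℝ≥0∞ :=
  ∫⁻ x in S, ENNReal.ofReal (w x) ∂μ

end

/-!
For `x, y` in a cell `P` with ball `B(z, r)`, compare `∫_{X ∖ 30B(P)} K(y, ·) f` with the truncation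
`∫_{d(x, ·) > 200r} K(x, ·) f`, which is bounded by `T^♯ f(x)`. The difference consists of two
integrals over regions at distance `≈ r` from `x` and from `y`, controlled by the size condition,
and of `∫_{X ∖ B(z, 256r)} (K(y, ·) - K(x, ·)) f`, controlled by the smoothness condition summed
over dyadic annuli around `x`, which produces the Dini norm. Each piece is at most a constant times
`M_λ f(x) = sup_R λ(x, R)⁻¹ ∫_{B(x, R)} |f|`, so `N_{Q₀} f ≤ T^♯ f + C M_λ f` on `Q₀`. Finally `M_λ`
has weak type `(1, 1)` on functions supported in a fixed ball by the Vitali covering lemma, with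
`μ(5B) ≤ λ(5B) ≤ C_λ³ λ(B)` in place of a doubling property of `μ`.
-/

lemma ENNReal.ofReal_half_lt_or_lt_of_lt_add {a b : ℝ≥0∞} {t c : ℝ} (ht : 0 < t) (hc : 0 < c)
    (h : ENNReal.ofReal t < a + ENNReal.ofReal c * b) :
    ENNReal.ofReal (t / 2) < a ∨ ENNReal.ofReal (t / 2 / c) < b := by
  by_contra! hab
  refine h.not_ge ((add_le_add hab.1 (mul_le_mul_right hab.2 _)).trans_eq ?_)
  rw [← ENNReal.ofReal_mul hc.le, mul_div_cancel₀ _ hc.ne', ← ENNReal.ofReal_add (by positivity)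
    (by positivity), add_halves]

lemma Set.PairwiseDisjoint.countable_of_measure_pos {α ι : Type*} [MeasurableSpace α]
    {μ : Measure α} {u : Set ι} {B : ι → Set α}
    (hB : ∀ i, MeasurableSet (B i)) (hdisj : u.PairwiseDisjoint B)
    (hpos : ∀ i ∈ u, 0 < μ (B i)) (hfin : μ (⋃ i ∈ u, B i) ≠ ∞) : u.Countable := by
  have h := Measure.countable_meas_pos_of_disjoint_of_meas_iUnion_ne_top μ
    (As := fun i : u => B i) (fun i => hB i)
    (fun i j hij => hdisj i.2 j.2 (Subtype.coe_ne_coe.2 hij)) (by rwa [iUnion_subtype])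
  rw [show {i : u | 0 < μ (B i)} = univ from eq_univ_of_forall fun i => hpos i i.2,
    countable_univ_iff] at h
  exact countable_coe_iff.1 h

lemma enorm_setIntegral_le_of_subset {α E : Type*} [MeasurableSpace α] {μ : Measure α}
    [NormedAddCommGroup E] [NormedSpace ℝ E] {g₁ g₂ : α → E} {A S C : Set α}
    (hA : MeasurableSet A) (hAS : A ⊆ S) (hAC : A ⊆ C) (hg₂ : IntegrableOn g₂ C μ) :
    ‖∫ z in S, g₁ z ∂μ‖ₑ ≤ ‖∫ z in C, g₂ z ∂μ‖ₑ + ∫⁻ z in C \ A, ‖g₂ z‖ₑ ∂μ +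
      ∫⁻ z in A, ‖g₁ z - g₂ z‖ₑ ∂μ + ∫⁻ z in S \ A, ‖g₁ z‖ₑ ∂μ := by
  by_cases hg₁ : IntegrableOn g₁ S μ
  swap
  · simp [integral_undef hg₁]
  have hsplit : ∫ z in S, g₁ z ∂μ = ∫ z in C, g₂ z ∂μ - ∫ z in C \ A, g₂ z ∂μ +
      ∫ z in A, (g₁ z - g₂ z) ∂μ + ∫ z in S \ A, g₁ z ∂μ := by
    rw [setIntegral_sdiff hA hg₂ hAC, setIntegral_sdiff hA hg₁ hAS,
      integral_sub (hg₁.mono_set hAS) (hg₂.mono_set hAC)]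
    abel
  rw [hsplit]
  refine (enorm_add_le _ _).trans ?_
  gcongr
  · refine (enorm_add_le _ _).trans ?_
    gcongr
    · refine enorm_sub_le.trans ?_
      gcongr
      exact enorm_integral_le_lintegral_enorm _
    · exact enorm_integral_le_lintegral_enorm _
  · exact enorm_integral_le_lintegral_enorm _

lemma IsDiniModulus.diniNorm_pos {ω : ℝ → ℝ} (hω : IsDiniModulus ω) : 0 < diniNorm ω :=
  (hω.pos _ (by positivity)).trans_le <|
    hω.summable.le_tsum 0 fun j _ => hω.nonneg _ (by positivity)

lemma IsDiniModulus.exists_forall_lt {ω : ℝ → ℝ} (hω : IsDiniModulus ω) {ε : ℝ} (hε : 0 < ε) :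
    ∃ δ > 0, ∀ t, 0 ≤ t → t ≤ δ → ω t < ε := by
  obtain ⟨j, hj⟩ := (hω.summable.tendsto_atTop_zero.eventually (gt_mem_nhds hε)).exists
  exact ⟨(2 : ℝ) ^ (-(j : ℤ)), by positivity, fun t ht htj =>
    (hω.mono ht (mem_Ici.2 (by positivity)) htj).trans_lt hj⟩

section

variable {X : Type*} [MetricSpace X] {lam : X → ℝ → ℝ} {Cl : ℝ} {ω : ℝ → ℝ} {K : X → X → ℂ}
  {CK : ℝ}

lemma compl_ball_subset_iUnion_annulus (x : X) {ρ : ℝ} (hρ : 0 < ρ) :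
    (ball x ρ)ᶜ ⊆ ⋃ j : ℕ, ball x (2 ^ (j + 1) * ρ) \ ball x (2 ^ j * ρ) := by
  intro z hz
  rw [mem_compl_iff, mem_ball, not_lt, dist_comm] at hz
  obtain ⟨j, hj, hj'⟩ := exists_nat_pow_near ((one_le_div hρ).2 hz) one_lt_two
  rw [le_div_iff₀ hρ] at hj
  rw [div_lt_iff₀ hρ] at hj'
  exact mem_iUnion.2 ⟨j, by simpa [dist_comm] using hj', by simpa [dist_comm] using hj⟩

lemma IsCZKernel.norm_sub_right_le (hK : IsCZKernel lam K CK ω) {x y z : X} (hxz : x ≠ z)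
    (h : dist x y < dist x z / 2) :
    ‖K y z - K x z‖ ≤ ω (dist x y / dist x z) / lam x (dist x z) := by
  rw [norm_sub_rev]
  linarith [hK.smooth x y z hxz h, norm_nonneg (K z x - K z y)]

variable [MeasurableSpace X] {μ : Measure X}

namespace IsUpperDoubling

lemma const_pos (hud : IsUpperDoubling μ lam Cl) : 0 < Cl :=
  zero_lt_one.trans hud.one_lt

lemma lam_le_pow_mul (hud : IsUpperDoubling μ lam Cl) (n : ℕ) (x : X) {r s : ℝ}
    (hs : 0 < s) (hsr : s ≤ 2 ^ n * r) : lam x s ≤ Cl ^ n * lam x r := by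
  induction n generalizing s with
  | zero => simpa using hud.lam_mono x s r hs (by simpa using hsr)
  | succ n ih =>
    have hCl : 0 ≤ Cl := hud.const_pos.le
    calc lam x s ≤ Cl * lam x (s / 2) := hud.halving x s hs
      _ ≤ Cl * (Cl ^ n * lam x r) := by
          gcongr
          exact ih (half_pos hs) (by rw [pow_succ] at hsr; linarith)
      _ = Cl ^ (n + 1) * lam x r := by ring

lemma lintegral_ball_le_Mlam (hud : IsUpperDoubling μ lam Cl) (f : X → ℂ) (x : X) {R : ℝ}
    (hR : 0 < R) :
    ∫⁻ z in ball x R, ‖f z‖ₑ ∂μ ≤ Mlam μ lam f x * ENNReal.ofReal (lam x R) := by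
  rw [← ENNReal.div_le_iff_le_mul (Or.inl (by simp [hud.lam_pos x R hR]))
    (Or.inl ENNReal.ofReal_ne_top)]
  exact le_iSup₂ (f := fun R _ => (∫⁻ z in ball x R, ‖f z‖₊ ∂μ) / ENNReal.ofReal (lam x R))
    R hR

lemma setLIntegral_mul_le_Mlam (hud : IsUpperDoubling μ lam Cl) {g f : X → ℂ} {x : X}
    {U : Set X} {C R : ℝ} (hU : MeasurableSet U) (hR : 0 < R) (hUR : U ⊆ ball x R)
    (hC : 0 ≤ C) (hg : ∀ z ∈ U, ‖g z‖ ≤ C) :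
    ∫⁻ z in U, ‖g z * f z‖ₑ ∂μ ≤ ENNReal.ofReal (C * lam x R) * Mlam μ lam f x :=
  calc ∫⁻ z in U, ‖g z * f z‖ₑ ∂μ ≤ ∫⁻ z in U, ENNReal.ofReal C * ‖f z‖ₑ ∂μ := by
        refine setLIntegral_mono' hU fun z hz => ?_
        rw [enorm_mul, ← ofReal_norm]
        gcongr
        exact hg z hz
    _ ≤ ENNReal.ofReal C * ∫⁻ z in ball x R, ‖f z‖ₑ ∂μ := by
        rw [lintegral_const_mul' _ _ ENNReal.ofReal_ne_top]
        gcongr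
    _ ≤ ENNReal.ofReal C * (Mlam μ lam f x * ENNReal.ofReal (lam x R)) := by
        gcongr
        exact hud.lintegral_ball_le_Mlam f x hR
    _ = ENNReal.ofReal (C * lam x R) * Mlam μ lam f x := by
        rw [ENNReal.ofReal_mul hC]
        ring

lemma exists_radius_of_lt_Mlam (hud : IsUpperDoubling μ lam Cl) {f : X → ℂ} {x : X}
    {ρ s : ℝ} (hρ : 0 < ρ) (hsupp : Function.support f ⊆ ball x ρ)
    (hs : ENNReal.ofReal s < Mlam μ lam f x) :
    ∃ R, 0 < R ∧ R ≤ ρ ∧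
      ENNReal.ofReal s * ENNReal.ofReal (lam x R) < ∫⁻ z in ball x R, ‖f z‖ₑ ∂μ := by
  obtain ⟨R, hR⟩ := lt_iSup_iff.1 hs
  obtain ⟨hR, hlt⟩ := lt_iSup_iff.1 hR
  rw [ENNReal.lt_div_iff_mul_lt (Or.inl (by simp [hud.lam_pos x R hR]))
    (Or.inl ENNReal.ofReal_ne_top)] at hlt
  rcases le_or_gt R ρ with hRρ | hρR
  · exact ⟨R, hR, hRρ, hlt⟩
  refine ⟨ρ, hρ, le_rfl, ?_⟩
  calc ENNReal.ofReal s * ENNReal.ofReal (lam x ρ)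
      ≤ ENNReal.ofReal s * ENNReal.ofReal (lam x R) := by
        gcongr
        exact hud.lam_mono x ρ R hρ hρR.le
    _ < ∫⁻ z in ball x R, ‖f z‖ₑ ∂μ := hlt
    _ ≤ ∫⁻ z in ball x ρ, ‖f z‖ₑ ∂μ := by
        rw [setLIntegral_eq_of_support_subset fun z hz => hsupp (by simpa using hz)]
        exact setLIntegral_le_lintegral _ _

lemma measure_ball_five_le (hud : IsUpperDoubling μ lam Cl) {b : X} {R s : ℝ} {I : ℝ≥0∞}
    (hR : 0 < R) (hs : 0 < s) (h : ENNReal.ofReal s * ENNReal.ofReal (lam b R) ≤ I) :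
    μ (ball b (5 * R)) ≤ ENNReal.ofReal (Cl ^ 3 / s) * I := by
  have hCl : 0 ≤ Cl ^ 3 := pow_nonneg hud.const_pos.le 3
  calc μ (ball b (5 * R)) ≤ ENNReal.ofReal (Cl ^ 3 * lam b R) :=
        (hud.measure_le b _ (by positivity)).trans <| ENNReal.ofReal_le_ofReal <|
          hud.lam_le_pow_mul 3 b (by positivity) (by linarith)
    _ = ENNReal.ofReal (Cl ^ 3 / s) * (ENNReal.ofReal s * ENNReal.ofReal (lam b R)) := by
        rw [← mul_assoc, ← ENNReal.ofReal_mul (div_nonneg hCl hs.le), div_mul_cancel₀ _ hs.ne',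
          ENNReal.ofReal_mul hCl]
    _ ≤ ENNReal.ofReal (Cl ^ 3 / s) * I := by gcongr

end IsUpperDoubling

namespace IsCZKernel

lemma of_le (hud : IsUpperDoubling μ lam Cl) (hK : IsCZKernel lam K CK ω) {CK' : ℝ}
    (h : CK ≤ CK') : IsCZKernel lam K CK' ω where
  size x y hxy := (hK.size x y hxy).trans <|
    div_le_div_of_nonneg_right h (hud.lam_pos _ _ (dist_pos.2 hxy)).le
  smooth := hK.smooth

lemma norm_le_of_le_dist (hud : IsUpperDoubling μ lam Cl) (hK : IsCZKernel lam K CK ω)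
    (hCK : 0 ≤ CK) {x z : X} {c : ℝ} (hc : 0 < c) (h : c ≤ dist x z) :
    ‖K x z‖ ≤ CK / lam x c :=
  (hK.size x z (dist_pos.1 (hc.trans_le h))).trans <|
    div_le_div_of_nonneg_left hCK (hud.lam_pos x c hc) (hud.lam_mono x c _ hc h)

/-- `K` is not assumed measurable: this continuity, which the Dini condition provides, is what
makes `K x` measurable away from `x`. -/
lemma continuousAt_right (hud : IsUpperDoubling μ lam Cl) (hω : IsDiniModulus ω)
    (hK : IsCZKernel lam K CK ω) {y z₀ : X} (h : z₀ ≠ y) :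
    ContinuousAt (K y) z₀ := by
  have hd : 0 < dist z₀ y := dist_pos.2 h
  have hlam : 0 < lam z₀ (dist z₀ y) := hud.lam_pos _ _ hd
  rw [Metric.continuousAt_iff]
  intro ε hε
  obtain ⟨δ, hδ, hωδ⟩ := hω.exists_forall_lt (mul_pos hε hlam)
  refine ⟨min (δ * dist z₀ y) (dist z₀ y / 2), by positivity, fun z hz => ?_⟩
  rw [dist_comm] at hz
  have hz₁ : dist z₀ z < δ * dist z₀ y := hz.trans_le (min_le_left _ _)
  have hz₂ : dist z₀ z < dist z₀ y / 2 := hz.trans_le (min_le_right _ _)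
  have hωz : ω (dist z₀ z / dist z₀ y) < ε * lam z₀ (dist z₀ y) :=
    hωδ _ (by positivity) ((div_le_iff₀ hd).2 hz₁.le)
  rw [dist_comm, dist_eq_norm]
  calc ‖K y z₀ - K y z‖ ≤ ω (dist z₀ z / dist z₀ y) / lam z₀ (dist z₀ y) := by
        linarith [hK.smooth z₀ z y h hz₂, norm_nonneg (K z₀ y - K z y)]
    _ < ε := by rwa [div_lt_iff₀ hlam]

end IsCZKernel

variable [BorelSpace X]

lemma IsCZKernel.integrableOn_mul (hud : IsUpperDoubling μ lam Cl) (hω : IsDiniModulus ω)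
    (hK : IsCZKernel lam K CK ω) (hCK : 0 ≤ CK) {f : X → ℂ} (hf : Integrable f μ)
    {x : X} {S : Set X} (hS : MeasurableSet S) {c : ℝ} (hc : 0 < c)
    (hdist : ∀ z ∈ S, c ≤ dist x z) :
    IntegrableOn (fun z => K x z * f z) S μ := by
  have hSx : S ⊆ {x}ᶜ := fun z hz hzx => by
    have := hdist z hz
    rw [mem_singleton_iff.1 hzx, dist_self] at this
    linarith
  have hKx : AEMeasurable (K x) (μ.restrict S) :=
    (ContinuousOn.aemeasurable (fun z hz => (hK.continuousAt_right hud hω hz).continuousWithinAt)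
      (measurableSet_singleton x).compl).mono_measure (Measure.restrict_mono hSx le_rfl)
  refine Integrable.mono' (hf.norm.restrict.const_mul (CK / lam x c))
    (hKx.mul hf.aemeasurable.restrict).aestronglyMeasurable
    ((ae_restrict_iff' hS).2 (ae_of_all _ fun z hz => ?_))
  rw [norm_mul]
  gcongr
  exact hK.norm_le_of_le_dist hud hCK hc (hdist z hz)

lemma IsCZKernel.lintegral_annulus_sub_le (hud : IsUpperDoubling μ lam Cl)
    (hω : IsDiniModulus ω) (hK : IsCZKernel lam K CK ω) (f : X → ℂ) {x y : X} {ρ : ℝ}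
    (hρ : 0 < ρ) (hxy : 2 * dist x y < ρ) (j : ℕ) :
    ∫⁻ z in ball x (2 ^ (j + 1) * ρ) \ ball x (2 ^ j * ρ), ‖(K y z - K x z) * f z‖ₑ ∂μ ≤
      ENNReal.ofReal (Cl * ω (2 ^ (-(j : ℤ)))) * Mlam μ lam f x := by
  have hρj : 0 < 2 ^ j * ρ := by positivity
  have hlam : 0 < lam x (2 ^ j * ρ) := hud.lam_pos _ _ hρj
  have hωj : 0 ≤ ω (2 ^ (-(j : ℤ))) := hω.nonneg _ (by positivity)
  refine (hud.setLIntegral_mul_le_Mlam (measurableSet_ball.diff measurableSet_ball)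
    (by positivity) sdiff_subset (div_nonneg hωj hlam.le) fun z hz => ?_).trans ?_
  · have hz : 2 ^ j * ρ ≤ dist x z := by simpa [dist_comm] using hz.2
    have hxz : 0 < dist x z := hρj.trans_le hz
    have h2j : (1 : ℝ) ≤ 2 ^ j := one_le_pow₀ one_le_two
    have hratio : dist x y / dist x z ≤ 2 ^ (-(j : ℤ)) := by
      rw [div_le_iff₀ hxz, zpow_neg, zpow_natCast, ← div_eq_inv_mul, le_div_iff₀ (by positivity)]
      nlinarith [dist_nonneg (x := x) (y := y)]
    calc ‖K y z - K x z‖ ≤ ω (dist x y / dist x z) / lam x (dist x z) :=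
          hK.norm_sub_right_le (dist_pos.1 hxz) (by nlinarith)
      _ ≤ ω (2 ^ (-(j : ℤ))) / lam x (2 ^ j * ρ) :=
          div_le_div₀ hωj (hω.mono (mem_Ici.2 (by positivity)) (mem_Ici.2 (by positivity))
            hratio) hlam (hud.lam_mono x _ _ hρj hz)
  · have hhalf : lam x (2 ^ (j + 1) * ρ) ≤ Cl * lam x (2 ^ j * ρ) := by
      simpa [pow_succ, mul_assoc, mul_div_assoc] using
        hud.halving x (2 ^ (j + 1) * ρ) (by positivity)
    gcongr ENNReal.ofReal ?_ * _
    rw [div_mul_eq_mul_div, div_le_iff₀ hlam]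
    linarith [mul_le_mul_of_nonneg_left hhalf hωj]

lemma IsCZKernel.lintegral_compl_ball_sub_le (hud : IsUpperDoubling μ lam Cl)
    (hω : IsDiniModulus ω) (hK : IsCZKernel lam K CK ω) (f : X → ℂ) {x y : X} {ρ : ℝ}
    (hρ : 0 < ρ) (hxy : 2 * dist x y < ρ) :
    ∫⁻ z in (ball x ρ)ᶜ, ‖(K y z - K x z) * f z‖ₑ ∂μ ≤
      ENNReal.ofReal (Cl * diniNorm ω) * Mlam μ lam f x := by
  have hCl : 0 ≤ Cl := hud.const_pos.le
  calc _ ≤ ∫⁻ z in ⋃ j : ℕ, ball x (2 ^ (j + 1) * ρ) \ ball x (2 ^ j * ρ),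
          ‖(K y z - K x z) * f z‖ₑ ∂μ :=
        lintegral_mono_set (compl_ball_subset_iUnion_annulus x hρ)
    _ ≤ ∑' j : ℕ, ENNReal.ofReal (Cl * ω (2 ^ (-(j : ℤ)))) * Mlam μ lam f x :=
        (lintegral_iUnion_le _ _).trans <| ENNReal.tsum_le_tsum
          (hK.lintegral_annulus_sub_le hud hω f hρ hxy)
    _ = ENNReal.ofReal (Cl * diniNorm ω) * Mlam μ lam f x := by
        rw [ENNReal.tsum_mul_right, ← ENNReal.ofReal_tsum_of_nonneg
          (fun j => mul_nonneg hCl (hω.nonneg _ (by positivity))) (hω.summable.mul_left Cl),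
          tsum_mul_left, diniNorm]

lemma IsCZKernel.enorm_setIntegral_compl_ball_le (hud : IsUpperDoubling μ lam Cl)
    (hω : IsDiniModulus ω) (hK : IsCZKernel lam K CK ω) (hCK : 0 ≤ CK) {f : X → ℂ}
    (hf : Integrable f μ) {x y z : X} {r : ℝ} (hr : 0 < r) (hx : dist x z ≤ 28 * r)
    (hy : dist y z ≤ 28 * r) :
    ‖∫ z' in (ball z (30 * r))ᶜ, K y z' * f z' ∂μ‖ₑ ≤ Tsharp μ K f x +
      ENNReal.ofReal (CK * Cl ^ 2 + Cl * diniNorm ω + CK * Cl ^ 9) * Mlam μ lam f x := by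
  have hCl : 0 ≤ Cl := hud.const_pos.le
  have hxy : dist x y ≤ 56 * r := by linarith [dist_triangle_right x y z]
  set A := (ball z (256 * r))ᶜ
  set C := (closedBall x (200 * r))ᶜ
  have hC : ∀ z' ∈ C, 200 * r ≤ dist x z' := fun z' hz' => by
    simp only [C, mem_compl_iff, mem_closedBall, not_le] at hz'
    linarith [dist_comm x z']
  have hAC : A ⊆ C := fun z' hz' => by
    have : 256 * r ≤ dist z' z := by simpa [A] using hz'
    simp only [C, mem_compl_iff, mem_closedBall, not_le]
    linarith [dist_triangle z' x z]
  have hAS : A ⊆ (ball z (30 * r))ᶜ :=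
    compl_subset_compl.2 (ball_subset_ball (by linarith))
  have hball : Aᶜ ⊆ ball x (512 * r) := by
    simpa [A] using ball_subset_ball' (show 256 * r + dist z x ≤ 512 * r by
      linarith [dist_comm x z])
  have hlam200 : 0 < lam x (200 * r) := hud.lam_pos _ _ (by positivity)
  have hlam2 : 0 < lam y (2 * r) := hud.lam_pos _ _ (by positivity)
  have hTsharp : ‖∫ z' in C, K x z' * f z' ∂μ‖ₑ ≤ Tsharp μ K f x := by
    rw [← ofReal_norm]
    exact le_iSup₂ (f := fun ε (_ : 0 < ε) =>
      ENNReal.ofReal ‖∫ z' in (closedBall x ε)ᶜ, K x z' * f z' ∂μ‖) (200 * r) (by positivity)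
  have hnear_x : ∫⁻ z' in C \ A, ‖K x z' * f z'‖ₑ ∂μ ≤
      ENNReal.ofReal (CK * Cl ^ 2) * Mlam μ lam f x := by
    refine (hud.setLIntegral_mul_le_Mlam (measurableSet_closedBall.compl.diff
      measurableSet_ball.compl) (by positivity) (fun z' hz' => hball hz'.2)
      (div_nonneg hCK hlam200.le) fun z' hz' =>
        hK.norm_le_of_le_dist hud hCK (by positivity) (hC z' hz'.1)).trans ?_
    gcongr ENNReal.ofReal ?_ * _
    rw [div_mul_eq_mul_div, div_le_iff₀ hlam200, mul_assoc]
    exact mul_le_mul_of_nonneg_left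
      (hud.lam_le_pow_mul 2 x (by positivity) (by norm_num; linarith)) hCK
  have hnear_y : ∫⁻ z' in (ball z (30 * r))ᶜ \ A, ‖K y z' * f z'‖ₑ ∂μ ≤
      ENNReal.ofReal (CK * Cl ^ 9) * Mlam μ lam f x := by
    have hdist : ∀ z' ∈ (ball z (30 * r))ᶜ, 2 * r ≤ dist y z' := fun z' hz' => by
      have : 30 * r ≤ dist z' z := by simpa using hz'
      linarith [dist_triangle z' y z, dist_comm y z']
    refine (hud.setLIntegral_mul_le_Mlam (measurableSet_ball.compl.diff
      measurableSet_ball.compl) (by positivity) (fun z' hz' => hball hz'.2)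
      (div_nonneg hCK hlam2.le) fun z' hz' =>
        hK.norm_le_of_le_dist hud hCK (by positivity) (hdist z' hz'.1)).trans ?_
    gcongr ENNReal.ofReal ?_ * _
    have hlam : lam x (512 * r) ≤ Cl ^ 9 * lam y (2 * r) :=
      calc lam x (512 * r) ≤ Cl * lam y (512 * r) := hud.close x y _ (by positivity) (by linarith)
        _ ≤ Cl * (Cl ^ 8 * lam y (2 * r)) := by
            gcongr
            exact hud.lam_le_pow_mul 8 y (by positivity) (by norm_num; linarith)
        _ = Cl ^ 9 * lam y (2 * r) := by ring
    rw [div_mul_eq_mul_div, div_le_iff₀ hlam2, mul_assoc]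
    exact mul_le_mul_of_nonneg_left hlam hCK
  have hfar : ∫⁻ z' in A, ‖K y z' * f z' - K x z' * f z'‖ₑ ∂μ ≤
      ENNReal.ofReal (Cl * diniNorm ω) * Mlam μ lam f x := by
    simp only [← sub_mul]
    refine (lintegral_mono_set (hAC.trans fun z' hz' => ?_)).trans
      (hK.lintegral_compl_ball_sub_le hud hω f (by positivity : 0 < 200 * r) (by linarith))
    simpa [dist_comm] using hC z' hz'
  refine (enorm_setIntegral_le_of_subset measurableSet_ball.compl hAS hAC
    (hK.integrableOn_mul hud hω hCK hf measurableSet_closedBall.compl (by positivity) hC)).trans ?_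
  calc _ ≤ Tsharp μ K f x + ENNReal.ofReal (CK * Cl ^ 2) * Mlam μ lam f x +
        ENNReal.ofReal (Cl * diniNorm ω) * Mlam μ lam f x +
        ENNReal.ofReal (CK * Cl ^ 9) * Mlam μ lam f x := by gcongr
    _ = _ := by
        have h₁ : 0 ≤ CK * Cl ^ 2 := mul_nonneg hCK (pow_nonneg hCl 2)
        have h₂ : 0 ≤ Cl * diniNorm ω := mul_nonneg hCl hω.diniNorm_pos.le
        have h₃ : 0 ≤ CK * Cl ^ 9 := mul_nonneg hCK (pow_nonneg hCl 9)
        rw [ENNReal.ofReal_add (add_nonneg h₁ h₂) h₃, ENNReal.ofReal_add h₁ h₂]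
        ring

lemma grandMax_le {C0 A0 : ℝ} (D : DavidMattila μ C0 A0) (hA0 : 0 < A0)
    (hud : IsUpperDoubling μ lam Cl) (hω : IsDiniModulus ω) (hK : IsCZKernel lam K CK ω)
    (hCK : 0 ≤ CK) {f : X → ℂ} (hf : Integrable f μ) (Q₀ : Set X) (x : X) :
    grandMax μ D K Q₀ f x ≤ Q₀.indicator (fun x => Tsharp μ K f x +
      ENNReal.ofReal (CK * Cl ^ 2 + Cl * diniNorm ω + CK * Cl ^ 9) * Mlam μ lam f x) x := by
  refine indicator_le_indicator <| iSup_le fun k => iSup_le fun P => iSup₂_le fun hP hxP =>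
    iSup_le fun _ => iSup₂_le fun y hyP => ?_
  rw [ofReal_norm]
  exact hK.enorm_setIntegral_compl_ball_le hud hω hCK hf
    ((zpow_pos hA0 _).trans_le (D.radius_lb k P hP))
    (mem_ball.1 (D.subset_ball k P hP hxP).2).le (mem_ball.1 (D.subset_ball k P hP hyP).2).le

lemma IsUpperDoubling.measure_lt_Mlam_le (hud : IsUpperDoubling μ lam Cl) {f : X → ℂ} {z : X}
    {ρ s : ℝ} (hsupp : Function.support f ⊆ ball z ρ) (hs : 0 < s) :
    μ {x ∈ ball z ρ | ENNReal.ofReal s < Mlam μ lam f x} ≤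
      ENNReal.ofReal (Cl ^ 3 / s) * ∫⁻ y, ‖f y‖ₑ ∂μ := by
  rcases le_or_gt ρ 0 with hρ | hρ
  · simp [ball_eq_empty.2 hρ]
  set E := {x ∈ ball z ρ | ENNReal.ofReal s < Mlam μ lam f x}
  -- `f` vanishes off `ball z ρ`, so the radii can be capped at `2 * ρ`, as Vitali's lemma requires.
  have hradius : ∀ x ∈ E, ∃ R, 0 < R ∧ R ≤ 2 * ρ ∧
      ENNReal.ofReal s * ENNReal.ofReal (lam x R) < ∫⁻ y in ball x R, ‖f y‖ₑ ∂μ := by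
    rintro x ⟨hx, hMx⟩
    exact hud.exists_radius_of_lt_Mlam (by positivity)
      (hsupp.trans (ball_subset_ball' (by linarith [mem_ball'.1 hx]))) hMx
  choose! R hR₀ hRρ hR using hradius
  obtain ⟨u, huE, hdisj, hcov⟩ := Vitali.exists_disjoint_subfamily_covering_enlargement_closedBall
    E id R (2 * ρ) hRρ 4 (by norm_num)
  simp only [id] at hdisj hcov
  have hu : u.Countable := by
    refine hdisj.countable_of_measure_pos (μ := μ) (fun _ => measurableSet_closedBall)
      (fun b hb => ?_) ?_
    · refine (pos_iff_ne_zero.2 fun h0 => ?_).trans_le (measure_mono ball_subset_closedBall)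
      have := hR b (huE hb)
      rw [setLIntegral_measure_zero _ _ h0] at this
      exact ENNReal.not_lt_zero this
    · refine ne_top_of_le_ne_top (hud.measure_le z (3 * ρ) ?_ |>.trans_lt ofReal_lt_top).ne
        (measure_mono (iUnion₂_subset fun b hb => closedBall_subset_ball' ?_))
      · positivity
      · linarith [hRρ b (huE hb), mem_ball.1 (huE hb).1]
  have hE : E ⊆ ⋃ b ∈ u, ball b (5 * R b) := fun x hx => by
    obtain ⟨b, hb, hsub⟩ := hcov x hx
    have := hsub (mem_closedBall_self (hR₀ x hx).le)
    simp only [mem_closedBall] at this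
    exact mem_biUnion hb (by rw [mem_ball]; linarith [hR₀ b (huE hb)])
  have := hu.to_subtype
  calc μ E ≤ ∑' b : u, μ (ball b (5 * R b)) := (measure_mono hE).trans (measure_biUnion_le μ hu _)
    _ ≤ ∑' b : u, ENNReal.ofReal (Cl ^ 3 / s) * ∫⁻ y in ball b (R b), ‖f y‖ₑ ∂μ :=
        ENNReal.tsum_le_tsum fun b =>
          hud.measure_ball_five_le (hR₀ b (huE b.2)) hs (hR b (huE b.2)).le
    _ = ENNReal.ofReal (Cl ^ 3 / s) * ∫⁻ y in ⋃ b : u, ball b (R b), ‖f y‖ₑ ∂μ := by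
        rw [ENNReal.tsum_mul_left, lintegral_iUnion (fun _ => measurableSet_ball)
          fun i j hij => (hdisj i.2 j.2 (Subtype.coe_ne_coe.2 hij)).mono
            ball_subset_closedBall ball_subset_closedBall]
    _ ≤ ENNReal.ofReal (Cl ^ 3 / s) * ∫⁻ y, ‖f y‖ₑ ∂μ := by
        gcongr _ * ?_
        exact setLIntegral_le_lintegral _ _


lemma setOf_lt_grandMax_subset {C0 A0 : ℝ} (D : DavidMattila μ C0 A0) (hA0 : 0 < A0)
    (hud : IsUpperDoubling μ lam Cl) (hω : IsDiniModulus ω) (hK : IsCZKernel lam K CK ω)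
    (hCK : 0 ≤ CK) {f : X → ℂ} (hf : Integrable f μ) {k₀ : ℕ} {Q₀ : Set X}
    (hQ₀ : Q₀ ∈ D.cells k₀) {t : ℝ} (ht : 0 < t) :
    {x | ENNReal.ofReal t < grandMax μ D K Q₀ f x} ⊆
      {x | ENNReal.ofReal (t / 2) < Tsharp μ K f x} ∪
        {x ∈ ball (D.center k₀ Q₀) (30 * D.radius k₀ Q₀) | ENNReal.ofReal
          (t / 2 / (CK * Cl ^ 2 + Cl * diniNorm ω + CK * Cl ^ 9)) < Mlam μ lam f x} := by
  have hCl := hud.const_pos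
  have hdini := hω.diniNorm_pos
  intro x hx
  have hle := grandMax_le D hA0 hud hω hK hCK hf Q₀ x
  by_cases hxQ : x ∈ Q₀
  · rw [indicator_of_mem hxQ] at hle
    have hxB := mem_ball.1 (D.subset_ball k₀ Q₀ hQ₀ hxQ).2
    refine (ENNReal.ofReal_half_lt_or_lt_of_lt_add ht (by positivity) (hx.trans_le hle)).imp id
      fun hM => ⟨mem_ball.2 ?_, hM⟩
    linarith [dist_nonneg (x := x) (y := D.center k₀ Q₀)]
  · rw [indicator_of_notMem hxQ] at hle
    exact absurd (hx.trans_le hle) ENNReal.not_lt_zero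

end

open MeasureTheory Metric Set ENNReal in
theorem grandMax_weak_type_general
    {X : Type*} [MetricSpace X] [MeasurableSpace X] [BorelSpace X]
    (μ : Measure X)
    (lam : X → ℝ → ℝ) (Cl : ℝ) (hud : IsUpperDoubling μ lam Cl)
    (ω : ℝ → ℝ) (hω : IsDiniModulus ω)
    (K : X → X → ℂ) (CK : ℝ) (hK : IsCZKernel lam K CK ω)
    (C0 A0 : ℝ) (hC0 : 1 < C0) (hA0 : 5000 * C0 < A0)
    (D : DavidMattila μ C0 A0)
    (CW : ℝ)
    (hweak : ∀ g : X → ℂ, Integrable g μ → ∀ t : ℝ, 0 < t →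
      μ {x | ENNReal.ofReal t < Tsharp μ K g x} ≤
        ENNReal.ofReal (CW / t) * ∫⁻ y, ‖g y‖₊ ∂μ) :
    ∃ C : ℝ, 0 < C ∧
      ∀ (k₀ : ℕ), ∀ Q₀ ∈ D.cells k₀,
        ∀ f : X → ℂ, Integrable f μ →
          Function.support f ⊆ ball (D.center k₀ Q₀) (30 * D.radius k₀ Q₀) →
          ∀ t : ℝ, 0 < t →
            μ {x | ENNReal.ofReal t < grandMax μ D K Q₀ f x} ≤
              ENNReal.ofReal (C / t) * ∫⁻ y, ‖f y‖₊ ∂μ := by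
  have hCl := hud.const_pos
  -- `CK < 0` is compatible with the size condition only on a one-point space.
  set C₁ := max CK 0 * Cl ^ 2 + Cl * diniNorm ω + max CK 0 * Cl ^ 9
  have hC₁ : 0 < C₁ := by
    have := hω.diniNorm_pos
    positivity
  refine ⟨2 * max CW 0 + 2 * C₁ * Cl ^ 3, by positivity, fun k₀ Q₀ hQ₀ f hf hsupp t ht => ?_⟩
  have hT : CW / (t / 2) ≤ 2 * max CW 0 / t := by
    rw [div_div_eq_mul_div, mul_comm]
    exact div_le_div_of_nonneg_right (by gcongr; exact le_max_left CW 0) ht.le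
  have hM : Cl ^ 3 / (t / 2 / C₁) = 2 * C₁ * Cl ^ 3 / t := by
    field_simp
  calc _ ≤ μ {x | ENNReal.ofReal (t / 2) < Tsharp μ K f x} +
        μ {x ∈ ball (D.center k₀ Q₀) (30 * D.radius k₀ Q₀) |
          ENNReal.ofReal (t / 2 / C₁) < Mlam μ lam f x} :=
      (measure_mono (setOf_lt_grandMax_subset D (by linarith) hud hω
        (hK.of_le hud (le_max_left CK 0)) (le_max_right CK 0) hf hQ₀ ht)).trans
        (measure_union_le _ _)
    _ ≤ ENNReal.ofReal (CW / (t / 2)) * ∫⁻ y, ‖f y‖₊ ∂μ +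
        ENNReal.ofReal (Cl ^ 3 / (t / 2 / C₁)) * ∫⁻ y, ‖f y‖₊ ∂μ :=
      add_le_add (hweak f hf _ (half_pos ht)) (hud.measure_lt_Mlam_le hsupp (by positivity))
    _ ≤ _ := by
      rw [← add_mul, hM, add_div, ENNReal.ofReal_add (by positivity) (by positivity)]
      gcongr

open MeasureTheory Metric Set ENNReal in
/-- The localized grand maximal truncated operators `N_{Q₀}` have weak type `(1,1)`
uniformly in the cell `Q₀`, provided the maximal truncation `T^♯` has weak type `(1,1)`. -/
theorem grandMax_weak_type
    {X : Type*} [MetricSpace X] [MeasurableSpace X] [BorelSpace X]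
    (μ : Measure X) [IsLocallyFiniteMeasure μ]
    (lam : X → ℝ → ℝ) (Cl : ℝ) (hud : IsUpperDoubling μ lam Cl)
    (ω : ℝ → ℝ) (hω : IsDiniModulus ω)
    (K : X → X → ℂ) (CK : ℝ) (hK : IsCZKernel lam K CK ω)
    (C0 A0 : ℝ) (hC0 : 1 < C0) (hA0 : 5000 * C0 < A0)
    (D : DavidMattila μ C0 A0)
    (CW : ℝ)
    (hweak : ∀ g : X → ℂ, Integrable g μ → ∀ t : ℝ, 0 < t →
      μ {x | ENNReal.ofReal t < Tsharp μ K g x} ≤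
        ENNReal.ofReal (CW / t) * ∫⁻ y, ‖g y‖₊ ∂μ) :
    ∃ C : ℝ, 0 < C ∧
      ∀ (k₀ : ℕ), ∀ Q₀ ∈ D.cells k₀,
        ∀ f : X → ℂ, Integrable f μ →
          Function.support f ⊆ ball (D.center k₀ Q₀) (30 * D.radius k₀ Q₀) →
          ∀ t : ℝ, 0 < t →
            μ {x | ENNReal.ofReal t < grandMax μ D K Q₀ f x} ≤
              ENNReal.ofReal (C / t) * ∫⁻ y, ‖f y‖₊ ∂μ :=
  grandMax_weak_type_general μ lam Cl hud ω hω K CK hK C0 A0 hC0 hA0 D CW hweak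
end

section
/- Let (X,d,μ) be upper doubling with dominating function λ and constant C_λ, let K: X×X∖Δ → ℂ satisfy the size bound |K(x,y)| ≤ C_K/λ(x,d(x,y)), and let α ≥ 200 and Λ ≥ 1. Then there is a constant C depending only on C_K, C_λ, α, Λ such that the following holds: whenever B = B(z,r) and B̂ = B(ẑ,r̂) are balls with B(z,30r) ⊂ B(ẑ,30r̂) and r ≤ r̂ ≤ Λ·r, x ∈ B(z,28r) ∩ B(ẑ,28r̂), and f ∈ L¹_loc(μ), one has ∫_{B(ẑ,30r̂)∖B(z,30r)} |K(x,y)|·|f(y)| dμ(y) ≤ C·λ(ẑ, α·r̂)^{−1}·∫_{B(ẑ,30r̂)} |f| dμ; equivalently, this quantity is at most C·Θ(B̂)·A(f,B̂) where Θ(B̂) := μ(B(ẑ,αr̂))/λ(ẑ, α·r̂) and A(f,B̂) := μ(B(ẑ,αr̂))^{−1} ∫_{B(ẑ,30r̂)} |f| dμ. -/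
open MeasureTheory Metric Set ENNReal

/-!
For `y` in the annulus `B(ẑ, 30r̂) \ B(z, 30r)` and `x ∈ B(z, 28r)` we have `d(x, y) ≥ 2r`, so the
size condition bounds `|K(x, y)|` by `C_K / λ(x, 2r)`. Since `d(x, ẑ) < 28r̂ ≤ αr̂` and
`αr̂ ≤ αΛr ≤ 2^N · 2r` with `N = ⌈αΛ⌉`, the comparability and doubling of `λ` give
`λ(ẑ, αr̂) ≤ C_λ^{N+1} λ(x, 2r)`. Hence `|K(x, ·)|` is bounded on the annulus by a constant
multiple of `λ(ẑ, αr̂)⁻¹`, and integrating against `|f|` gives the estimate.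
-/

theorem two_mul_le_dist_of_mem_ball_of_notMem_ball {X : Type*} [PseudoMetricSpace X] {z x y : X}
    {r : ℝ} (hx : x ∈ ball z (28 * r)) (hy : y ∉ ball z (30 * r)) : 2 * r ≤ dist x y := by
  rw [mem_ball] at hx hy
  linarith [dist_triangle y x z, dist_comm x y]

theorem setLIntegral_nnnorm_mul_le {α E F : Type*} [MeasurableSpace α] {μ : Measure α}
    [NormedAddCommGroup E] [NormedAddCommGroup F] {S T : Set α} (hS : MeasurableSet S)
    (hST : S ⊆ T) {g : α → E} {c : ℝ} (hg : ∀ y ∈ S, ‖g y‖ ≤ c) (f : α → F) :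
    ∫⁻ y in S, ‖g y‖₊ * ‖f y‖₊ ∂μ ≤ ENNReal.ofReal c * ∫⁻ y in T, ‖f y‖₊ ∂μ :=
  calc ∫⁻ y in S, ‖g y‖₊ * ‖f y‖₊ ∂μ ≤ ∫⁻ y in S, ENNReal.ofReal c * ‖f y‖₊ ∂μ := by
        refine setLIntegral_mono' hS fun y hy => ?_
        gcongr
        rw [← ENNReal.ofReal_coe_nnreal, coe_nnnorm]
        exact ENNReal.ofReal_le_ofReal (hg y hy)
    _ = ENNReal.ofReal c * ∫⁻ y in S, ‖f y‖₊ ∂μ := lintegral_const_mul' _ _ ofReal_ne_top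
    _ ≤ ENNReal.ofReal c * ∫⁻ y in T, ‖f y‖₊ ∂μ := by gcongr

section

variable {X : Type*} [MetricSpace X] [MeasurableSpace X] {μ : Measure X} {lam : X → ℝ → ℝ} {Cl : ℝ}

namespace IsUpperDoubling

variable (hud : IsUpperDoubling μ lam Cl)
include hud

theorem const_pos_s8 : 0 < Cl := zero_lt_one.trans hud.one_lt

theorem lam_two_pow_mul_le (x : X) {t : ℝ} (ht : 0 < t) (n : ℕ) :
    lam x (2 ^ n * t) ≤ Cl ^ n * lam x t := by
  induction n with
  | zero => simp
  | succ n ih =>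
    calc lam x (2 ^ (n + 1) * t) ≤ Cl * lam x (2 ^ (n + 1) * t / 2) :=
          hud.halving x _ (by positivity)
      _ = Cl * lam x (2 ^ n * t) := by rw [pow_succ]; ring_nf
      _ ≤ Cl * (Cl ^ n * lam x t) := by
          gcongr
          exact hud.const_pos_s8.le
      _ = Cl ^ (n + 1) * lam x t := by ring

theorem lam_le_pow_mul_of_dist_le {x y : X} {ρ t : ℝ} (hρ : 0 < ρ) (ht : 0 < t) (n : ℕ)
    (hxy : dist x y ≤ ρ) (hρt : ρ ≤ 2 ^ n * t) :
    lam x ρ ≤ Cl ^ (n + 1) * lam y t :=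
  calc lam x ρ ≤ Cl * lam y ρ := hud.close x y ρ hρ hxy
    _ ≤ Cl * lam y (2 ^ n * t) := by
        gcongr
        · exact hud.const_pos_s8.le
        · exact hud.lam_mono y ρ _ hρ hρt
    _ ≤ Cl * (Cl ^ n * lam y t) := by
        gcongr
        · exact hud.const_pos_s8.le
        · exact hud.lam_two_pow_mul_le y ht n
    _ = Cl ^ (n + 1) * lam y t := by ring

theorem norm_le_div_lam_of_le_dist {K : X → X → ℂ} {CK : ℝ}
    (hK : ∀ x y, x ≠ y → ‖K x y‖ ≤ CK / lam x (dist x y)) {x y : X} {t : ℝ} (ht : 0 < t)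
    (htxy : t ≤ dist x y) : ‖K x y‖ ≤ max CK 0 / lam x t := by
  have hxy : x ≠ y := dist_pos.mp (ht.trans_le htxy)
  calc ‖K x y‖ ≤ CK / lam x (dist x y) := hK x y hxy
    _ ≤ max CK 0 / lam x (dist x y) := by
        gcongr
        · exact (hud.lam_pos x _ (ht.trans_le htxy)).le
        · exact le_max_left _ _
    _ ≤ max CK 0 / lam x t := by
        gcongr
        · exact hud.lam_pos x t ht
        · exact hud.lam_mono x t _ ht htxy

theorem theta_mul_cellAvg {α s : ℝ} (hαs : 0 < α * s) (z : X) (f : X → ℂ)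
    (h0 : μ (ball z (α * s)) ≠ 0) :
    theta μ lam α z s * cellAvg μ α f z s =
      (∫⁻ y in ball z (30 * s), ‖f y‖₊ ∂μ) / ENNReal.ofReal (lam z (α * s)) := by
  have hfin : μ (ball z (α * s)) ≠ ∞ := ((hud.measure_le z _ hαs).trans_lt ofReal_lt_top).ne
  rw [theta, cellAvg, mul_comm, ← mul_div_assoc, ENNReal.div_mul_cancel h0 hfin]

theorem norm_le_div_lam_of_mem_annulus {K : X → X → ℂ} {CK : ℝ}
    (hK : ∀ x y, x ≠ y → ‖K x y‖ ≤ CK / lam x (dist x y)) {α Λ r s : ℝ} (hα : 28 ≤ α)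
    (hr : 0 < r) (hrs : r ≤ s) (hsΛ : s ≤ Λ * r) {z z' x y : X}
    (hx : x ∈ ball z (28 * r) ∩ ball z' (28 * s)) (hy : y ∉ ball z (30 * r)) :
    ‖K x y‖ ≤ max CK 1 * Cl ^ (⌈α * Λ⌉₊ + 1) / lam z' (α * s) := by
  set N := ⌈α * Λ⌉₊
  have h2r : 0 < 2 * r := by positivity
  have hαs : 0 < α * s := by nlinarith
  have hdist : dist z' x ≤ α * s := by
    rw [dist_comm]
    nlinarith [mem_ball.mp hx.2]
  have hscale : α * s ≤ 2 ^ N * (2 * r) := by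
    have hN : α * Λ ≤ 2 ^ N :=
      (Nat.le_ceil _).trans (by exact_mod_cast (Nat.lt_two_pow_self (n := N)).le)
    nlinarith [mul_le_mul_of_nonneg_left hsΛ (by linarith : (0 : ℝ) ≤ α)]
  have hlam : lam z' (α * s) ≤ Cl ^ (N + 1) * lam x (2 * r) :=
    hud.lam_le_pow_mul_of_dist_le hαs h2r N hdist hscale
  have hlamx := hud.lam_pos x _ h2r
  calc ‖K x y‖ ≤ max CK 0 / lam x (2 * r) :=
        hud.norm_le_div_lam_of_le_dist hK h2r
          (two_mul_le_dist_of_mem_ball_of_notMem_ball hx.1 hy)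
    _ ≤ max CK 1 * Cl ^ (N + 1) / lam z' (α * s) := by
        rw [div_le_div_iff₀ hlamx (hud.lam_pos _ _ hαs), mul_assoc]
        exact mul_le_mul (max_le_max le_rfl zero_le_one) hlam (hud.lam_pos _ _ hαs).le
          (by positivity)

end IsUpperDoubling
end

open MeasureTheory Metric Set ENNReal in
theorem consecutive_scales_estimate_general
    {X : Type*} [MetricSpace X] [MeasurableSpace X] [BorelSpace X]
    (μ : Measure X)
    (lam : X → ℝ → ℝ) (Cl : ℝ) (hud : IsUpperDoubling μ lam Cl)
    (K : X → X → ℂ) (CK : ℝ)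
    (hK : ∀ x y, x ≠ y → ‖K x y‖ ≤ CK / lam x (dist x y))
    (α : ℝ) (hα : 200 ≤ α) (Λ : ℝ) :
    ∃ C : ℝ, 0 < C ∧
      ∀ (z z' : X) (r s : ℝ), 0 < r →
        ball z (30 * r) ⊆ ball z' (30 * s) → r ≤ s → s ≤ Λ * r →
        ∀ x ∈ ball z (28 * r) ∩ ball z' (28 * s),
          ∀ f : X → ℂ, (∀ (c : X) (R : ℝ), IntegrableOn f (ball c R) μ) →
            (∫⁻ y in ball z' (30 * s) \ ball z (30 * r), ‖K x y‖₊ * ‖f y‖₊ ∂μ) ≤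
                ENNReal.ofReal C *
                  ((∫⁻ y in ball z' (30 * s), ‖f y‖₊ ∂μ) /
                    ENNReal.ofReal (lam z' (α * s))) ∧
            (∫⁻ y in ball z' (30 * s) \ ball z (30 * r), ‖K x y‖₊ * ‖f y‖₊ ∂μ) ≤
                ENNReal.ofReal C * (theta μ lam α z' s * cellAvg μ α f z' s) := by
  refine ⟨max CK 1 * Cl ^ (⌈α * Λ⌉₊ + 1), by have := hud.const_pos_s8; positivity, ?_⟩
  intro z z' r s hr _ hrs hsΛ x hx f _
  have hαs : 0 < α * s := by nlinarith
  have hannulus : MeasurableSet (ball z' (30 * s) \ ball z (30 * r)) :=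
    measurableSet_ball.diff measurableSet_ball
  have hbound := calc
    ∫⁻ y in ball z' (30 * s) \ ball z (30 * r), ‖K x y‖₊ * ‖f y‖₊ ∂μ
      ≤ ENNReal.ofReal (max CK 1 * Cl ^ (⌈α * Λ⌉₊ + 1) / lam z' (α * s)) *
          ∫⁻ y in ball z' (30 * s), ‖f y‖₊ ∂μ :=
        setLIntegral_nnnorm_mul_le hannulus sdiff_subset
          (fun y hy => hud.norm_le_div_lam_of_mem_annulus hK (by linarith) hr hrs hsΛ hx hy.2) f
    _ = ENNReal.ofReal (max CK 1 * Cl ^ (⌈α * Λ⌉₊ + 1)) *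
          ((∫⁻ y in ball z' (30 * s), ‖f y‖₊ ∂μ) / ENNReal.ofReal (lam z' (α * s))) := by
        rw [ENNReal.ofReal_div_of_pos (hud.lam_pos _ _ hαs), ENNReal.mul_comm_div]
  refine ⟨hbound, ?_⟩
  -- If `μ(B(ẑ, αr̂)) = 0` then `Θ(B̂) = 0` while `A(f, B̂)` is a junk `∞`; the annulus is null.
  rcases eq_or_ne (μ (ball z' (α * s))) 0 with h0 | h0
  · have hnull : μ (ball z' (30 * s) \ ball z (30 * r)) = 0 :=
      measure_mono_null (sdiff_subset.trans (ball_subset_ball (by nlinarith))) h0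
    simp [setLIntegral_measure_zero _ _ hnull]
  · rwa [hud.theta_mul_cellAvg hαs z' f h0]

open MeasureTheory Metric Set ENNReal in
/-- Estimate for consecutive scales: the kernel integrated against `f` over the annulus
between two nested enlarged balls is controlled by `Θ(B̂) A(f,B̂)`. -/
theorem consecutive_scales_estimate
    {X : Type*} [MetricSpace X] [MeasurableSpace X] [BorelSpace X]
    (μ : Measure X) [IsLocallyFiniteMeasure μ]
    (lam : X → ℝ → ℝ) (Cl : ℝ) (hud : IsUpperDoubling μ lam Cl)
    (K : X → X → ℂ) (CK : ℝ)
    (hK : ∀ x y, x ≠ y → ‖K x y‖ ≤ CK / lam x (dist x y))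
    (α : ℝ) (hα : 200 ≤ α) (Λ : ℝ) (hΛ : 1 ≤ Λ) :
    ∃ C : ℝ, 0 < C ∧
      ∀ (z z' : X) (r s : ℝ), 0 < r →
        ball z (30 * r) ⊆ ball z' (30 * s) → r ≤ s → s ≤ Λ * r →
        ∀ x ∈ ball z (28 * r) ∩ ball z' (28 * s),
          ∀ f : X → ℂ, (∀ (c : X) (R : ℝ), IntegrableOn f (ball c R) μ) →
            (∫⁻ y in ball z' (30 * s) \ ball z (30 * r), ‖K x y‖₊ * ‖f y‖₊ ∂μ) ≤
                ENNReal.ofReal C *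
                  ((∫⁻ y in ball z' (30 * s), ‖f y‖₊ ∂μ) /
                    ENNReal.ofReal (lam z' (α * s))) ∧
            (∫⁻ y in ball z' (30 * s) \ ball z (30 * r), ‖K x y‖₊ * ‖f y‖₊ ∂μ) ≤
                ENNReal.ofReal C * (theta μ lam α z' s * cellAvg μ α f z' s) :=
  consecutive_scales_estimate_general μ lam Cl hud K CK hK α hα Λ
end
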